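/- Let C_n be the cycle on n ≥ 3 vertices. Then I(C_n, −1) = 2·(−1)^n if n ≡ 0 (mod 3), and I(C_n, −1) = (−1)^{n−1} if n ≡ 1 or 2 (mod 3). -/

import Mathlib

open Finset Polynomial

/-- Every subset of a finite type gets a `Fintype` instance (classically). -/
noncomputable instance fintypeOfSet {V : Type*} [Finite V] (s : Set V) : Fintype ↥s :=
  Fintype.ofFinite _

/-- `s` is an independent set of the graph `G`: no two of its vertices are adjacent. -/
def IsIndepSet {V : Type*} (G : SimpleGraph V) (s : Finset V) : Prop :=
  ∀ u ∈ s, ∀ v ∈ s, ¬ G.Adj u v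

/-- The finset of all independent sets of `G`. -/
noncomputable def indepFinsets {V : Type*} [Fintype V] (G : SimpleGraph V) :
    Finset (Finset V) :=
  @Finset.filter _ (fun s => IsIndepSet G s) (Classical.decPred _) Finset.univ

/-- `sCount G i` is the number of independent sets of size `i` in `G`. -/
noncomputable def sCount {V : Type*} [Fintype V] (G : SimpleGraph V) (i : ℕ) : ℕ :=
  ((indepFinsets G).filter (fun s => s.card = i)).card

/-- The independence number `α(G)`: the maximum size of an independent set. -/
noncomputable def indepNum {V : Type*} [Fintype V] (G : SimpleGraph V) : ℕ :=
  (indepFinsets G).sup Finset.card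

/-- The independence polynomial `I(G,t) = Σ_i s_i(G) t^i ∈ ℤ[t]`. -/
noncomputable def indepPoly {V : Type*} [Fintype V] (G : SimpleGraph V) : Polynomial ℤ :=
  ∑ i ∈ Finset.range (indepNum G + 1), Polynomial.C (sCount G i : ℤ) * Polynomial.X ^ i

/-- The h-polynomial of the edge ideal of `G`:
`h_G(t) = Σ_i s_i(G) t^i (1-t)^{α(G)-i} ∈ ℤ[t]`. -/
noncomputable def hPoly {V : Type*} [Fintype V] (G : SimpleGraph V) : Polynomial ℤ :=
  ∑ i ∈ Finset.range (indepNum G + 1),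
    Polynomial.C (sCount G i : ℤ) * Polynomial.X ^ i *
      (1 - Polynomial.X) ^ (indepNum G - i)

/-- The degree of a vertex in a finite simple graph. -/
noncomputable def deg {V : Type*} [Fintype V] (G : SimpleGraph V) (v : V) : ℕ :=
  (@Finset.filter _ (fun u => G.Adj v u) (Classical.decPred _) Finset.univ).card

/-! ### Auxiliary material -/

lemma mem_indepFinsets {V : Type*} [Fintype V] {G : SimpleGraph V} {s : Finset V} :
    s ∈ indepFinsets G ↔ IsIndepSet G s := by
  simp [indepFinsets]

lemma eval_indepPoly_eq_sum {V : Type*} [Fintype V] (G : SimpleGraph V) (x : ℤ) :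
    (indepPoly G).eval x = ∑ s ∈ indepFinsets G, x ^ s.card := by
  classical
  rw [← Finset.sum_fiberwise_of_maps_to (t := Finset.range (indepNum G + 1))
      (g := fun s : Finset V => s.card)
      (fun s hs => Finset.mem_range.2 (Nat.lt_succ_of_le (Finset.le_sup hs)))
      (fun s => x ^ s.card)]
  unfold indepPoly
  rw [Polynomial.eval_finset_sum]
  refine Finset.sum_congr rfl fun i _ => ?_
  rw [Finset.sum_congr rfl (g := fun _ => x ^ i)
      (fun s hs => by rw [(Finset.mem_filter.1 hs).2])]
  simp [sCount, mul_comm]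

lemma exists_map_eq {α β : Type*} [DecidableEq α] [DecidableEq β] (e : α ↪ β) (s : Finset β)
    (h : ∀ x ∈ s, ∃ a, e a = x) : ∃ t : Finset α, t.map e = s := by
  classical
  induction s using Finset.induction with
  | empty => exact ⟨∅, rfl⟩
  | @insert x s hx ih =>
    obtain ⟨t, rfl⟩ := ih (fun y hy => h y (Finset.mem_insert_of_mem hy))
    obtain ⟨a, rfl⟩ := h x (Finset.mem_insert_self _ _)
    exact ⟨insert a t, by rw [Finset.map_insert]⟩

lemma sum_sign_map {α β : Type*} [DecidableEq α] [DecidableEq β] (e : α ↪ β)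
    (A : Finset (Finset α)) (B : Finset (Finset β))
    (hmem : ∀ t : Finset α, t ∈ A ↔ t.map e ∈ B)
    (hsurj : ∀ s ∈ B, ∀ x ∈ s, ∃ a, e a = x) :
    ∑ s ∈ B, (-1:ℤ)^s.card = ∑ t ∈ A, (-1:ℤ)^t.card := by
  refine (Finset.sum_bij (fun t _ => t.map e) (fun t ht => (hmem t).1 ht)
    (fun a _ b _ h => Finset.map_injective e h)
    (fun s hs => ?_) (fun t _ => by rw [Finset.card_map])).symm
  obtain ⟨t, rfl⟩ := exists_map_eq e s (hsurj s hs)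
  exact ⟨t, (hmem t).2 hs, rfl⟩

lemma sum_sign_insert_map {α β : Type*} [DecidableEq α] [DecidableEq β] (e : α ↪ β) (v : β)
    (hv : ∀ a : α, e a ≠ v)
    (A : Finset (Finset α)) (B : Finset (Finset β))
    (hmem : ∀ t : Finset α, t ∈ A ↔ insert v (t.map e) ∈ B)
    (hB : ∀ s ∈ B, v ∈ s)
    (hsurj : ∀ s ∈ B, ∀ x ∈ s, x ≠ v → ∃ a, e a = x) :
    ∑ s ∈ B, (-1:ℤ)^s.card = -∑ t ∈ A, (-1:ℤ)^t.card := by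
  have hvm : ∀ t : Finset α, v ∉ t.map e := by
    intro t hvt
    obtain ⟨a, _, ha⟩ := Finset.mem_map.1 hvt
    exact hv a ha
  rw [← Finset.sum_neg_distrib]
  refine (Finset.sum_bij (fun t _ => insert v (t.map e)) (fun t ht => (hmem t).1 ht)
    (fun a ha b hb h => ?_) (fun s hs => ?_) (fun t _ => ?_)).symm
  · apply Finset.map_injective e
    have := congrArg (Finset.erase · v) h
    simpa [Finset.erase_insert, hvm] using this
  · obtain ⟨t, ht⟩ := exists_map_eq e (s.erase v) (fun x hx =>
      hsurj s hs x (Finset.mem_of_mem_erase hx) (Finset.ne_of_mem_erase hx))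
    have hts : insert v (t.map e) = s := by rw [ht, Finset.insert_erase (hB s hs)]
    exact ⟨t, (hmem t).2 (hts ▸ hs), hts⟩
  · rw [Finset.card_insert_of_notMem (hvm t), Finset.card_map, pow_succ]
    ring

lemma isIndep_map_iff {α β : Type*} (e : α ↪ β) {G : SimpleGraph β} {H : SimpleGraph α}
    (h : ∀ a b : α, G.Adj (e a) (e b) ↔ H.Adj a b) (t : Finset α) :
    IsIndepSet G (t.map e) ↔ IsIndepSet H t := by
  constructor
  · intro hi a ha b hb hadj
    exact hi _ (mem_map_of_mem e ha) _ (mem_map_of_mem e hb) ((h a b).2 hadj)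
  · intro hi u hu w hw hadj
    obtain ⟨a, ha, rfl⟩ := Finset.mem_map.1 hu
    obtain ⟨b, hb, rfl⟩ := Finset.mem_map.1 hw
    exact hi a ha b hb ((h a b).1 hadj)

/-- Signed count of independent sets of the path graph. -/
noncomputable def Psum (n : ℕ) : ℤ :=
  ∑ s ∈ indepFinsets (SimpleGraph.pathGraph n), (-1:ℤ)^s.card

/-- Signed count of independent sets of the cycle graph. -/
noncomputable def Csum (n : ℕ) : ℤ :=
  ∑ s ∈ indepFinsets (SimpleGraph.cycleGraph n), (-1:ℤ)^s.card

lemma Psum_zero : Psum 0 = 1 := by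
  have : indepFinsets (SimpleGraph.pathGraph 0) = {∅} := by
    apply Finset.eq_singleton_iff_unique_mem.2
    refine ⟨mem_indepFinsets.2 (fun u hu => u.elim0), fun s _ => ?_⟩
    exact Finset.eq_empty_of_forall_notMem (fun x => x.elim0)
  simp [Psum, this]

lemma Psum_one : Psum 1 = 0 := by
  have h : indepFinsets (SimpleGraph.pathGraph 1) = Finset.univ := by
    apply Finset.eq_univ_of_forall
    intro s
    refine mem_indepFinsets.2 (fun u _ v _ hadj => ?_)
    rcases SimpleGraph.pathGraph_adj.1 hadj with h | h <;> omega
  rw [Psum, h]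
  decide

lemma path_rec (n : ℕ) : Psum (n+2) = Psum (n+1) - Psum n := by
  classical
  set v : Fin (n+2) := ⟨n+1, by omega⟩ with hvdef
  have hsplit := Finset.sum_filter_add_sum_filter_not
    (indepFinsets (SimpleGraph.pathGraph (n+2))) (fun s => v ∈ s)
    (fun s => (-1:ℤ)^s.card)
  have h2 : ∑ s ∈ (indepFinsets (SimpleGraph.pathGraph (n+2))).filter (fun s => v ∈ s),
      (-1:ℤ)^s.card = -Psum n := by
    refine sum_sign_insert_map ⟨fun x : Fin n => (⟨x.val, by omega⟩ : Fin (n+2)),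
      fun a b h => by simpa [Fin.ext_iff] using h⟩ v ?_ _ _ ?_ ?_ ?_
    · intro a h
      have h1 := a.isLt
      have h2 : (a : ℕ) = n + 1 := congrArg Fin.val h
      omega
    · intro t
      simp only [mem_indepFinsets, Finset.mem_filter, Finset.mem_insert_self, and_true]
      constructor
      · intro hi u hu w hw hadj
        rcases Finset.mem_insert.1 hu with rfl | hu' <;>
          rcases Finset.mem_insert.1 hw with rfl | hw'
        · exact SimpleGraph.irrefl _ hadj
        · obtain ⟨b, hb, rfl⟩ := Finset.mem_map.1 hw'
          rcases SimpleGraph.pathGraph_adj.1 hadj with h | h <;>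
            dsimp only [DFunLike.coe] at h <;> have : v.val = n + 1 := rfl <;> omega
        · obtain ⟨b, hb, rfl⟩ := Finset.mem_map.1 hu'
          rcases SimpleGraph.pathGraph_adj.1 hadj with h | h <;>
            dsimp only [DFunLike.coe] at h <;> have : v.val = n + 1 := rfl <;> omega
        · obtain ⟨a, ha, rfl⟩ := Finset.mem_map.1 hu'
          obtain ⟨b, hb, rfl⟩ := Finset.mem_map.1 hw'
          refine hi a ha b hb (SimpleGraph.pathGraph_adj.2 ?_)
          rcases SimpleGraph.pathGraph_adj.1 hadj with h | h <;>
            dsimp only [DFunLike.coe] at h <;> [left; right] <;> omega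
      · intro hi a ha b hb hadj
        refine hi _ (Finset.mem_insert_of_mem (mem_map_of_mem _ ha))
          _ (Finset.mem_insert_of_mem (mem_map_of_mem _ hb))
          (SimpleGraph.pathGraph_adj.2 ?_)
        rcases SimpleGraph.pathGraph_adj.1 hadj with h | h <;> [left; right] <;>
          (dsimp only [DFunLike.coe]; simpa using h)
    · intro s hs
      exact (Finset.mem_filter.1 hs).2
    · intro s hs x hx hxv
      have hind := mem_indepFinsets.1 (Finset.mem_filter.1 hs).1
      have hvs := (Finset.mem_filter.1 hs).2
      have hxn : x.val < n := by
        have h1 : x.val < n + 2 := x.isLt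
        have h2 : x.val ≠ n + 1 := fun h => hxv (Fin.ext h)
        have h3 : x.val ≠ n := by
          intro h
          exact hind x hx v hvs (SimpleGraph.pathGraph_adj.2 (Or.inl (by simp [hvdef, h])))
        omega
      exact ⟨⟨x.val, hxn⟩, Fin.ext rfl⟩
  have h1 : ∑ s ∈ (indepFinsets (SimpleGraph.pathGraph (n+2))).filter (fun s => ¬ v ∈ s),
      (-1:ℤ)^s.card = Psum (n+1) := by
    refine sum_sign_map (Fin.castSuccEmb) _ _ ?_ ?_
    · intro t
      simp only [mem_indepFinsets, Finset.mem_filter]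
      rw [isIndep_map_iff _ (fun a b => ?_)]
      · constructor
        · intro hi
          refine ⟨hi, fun hvm => ?_⟩
          obtain ⟨a, _, ha⟩ := Finset.mem_map.1 hvm
          have h1 : (a : ℕ) = n + 1 := by simpa [Fin.ext_iff] using ha
          have := a.isLt
          omega
        · exact fun h => h.1
      · rw [SimpleGraph.pathGraph_adj, SimpleGraph.pathGraph_adj]
        simp
    · intro s hs x hx
      have hxv : x ≠ v := fun h => (Finset.mem_filter.1 hs).2 (h ▸ hx)
      have : x.val < n + 1 := by
        have h1 := x.isLt
        have h2 : x.val ≠ n + 1 := fun h => hxv (Fin.ext h)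
        omega
      exact ⟨⟨x.val, this⟩, Fin.ext rfl⟩
  rw [Psum, ← hsplit, h1, h2]
  ring

lemma cyc_adj_iff_val {n : ℕ} (u w : Fin (n+3)) :
    (SimpleGraph.cycleGraph (n+3)).Adj u w ↔
      (u.val = (if w.val = n+2 then 0 else w.val + 1) ∨
       w.val = (if u.val = n+2 then 0 else u.val + 1)) := by
  rw [SimpleGraph.cycleGraph_adj, sub_eq_iff_eq_add, sub_eq_iff_eq_add,
      add_comm (1 : Fin (n+3)) w, add_comm (1 : Fin (n+3)) u,
      Fin.ext_iff (a := u), Fin.ext_iff (a := w), Fin.val_add_one, Fin.val_add_one]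
  simp only [Fin.ext_iff, Fin.val_last]

lemma cyc_adj_of_lt {n : ℕ} {u w : Fin (n+3)} (hu : u.val < n+2) (hw : w.val < n+2) :
    (SimpleGraph.cycleGraph (n+3)).Adj u w ↔ (u.val + 1 = w.val ∨ w.val + 1 = u.val) := by
  rw [cyc_adj_iff_val]
  split_ifs <;> omega

lemma cyc_adj_last {n : ℕ} {u y : Fin (n+3)} (hu : u.val = n+2) :
    (SimpleGraph.cycleGraph (n+3)).Adj u y ↔ (y.val = 0 ∨ y.val = n+1) := by
  have := y.isLt
  rw [cyc_adj_iff_val]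
  split_ifs <;> omega

/-- Embedding `Fin n ↪ Fin (n+3)` shifting by one. -/
def emb1 (n : ℕ) : Fin n ↪ Fin (n+3) :=
  ⟨fun x => ⟨x.val + 1, by omega⟩, fun a b h => Fin.ext (by
    have : a.val + 1 = b.val + 1 := congrArg Fin.val h
    omega)⟩

lemma emb1_val {n : ℕ} (x : Fin n) : ((emb1 n) x : ℕ) = x.val + 1 := rfl

lemma cyc_rec (n : ℕ) : Csum (n+3) = Psum (n+2) - Psum n := by
  classical
  set v : Fin (n+3) := ⟨n+2, by omega⟩ with hvdef
  have hvval : v.val = n+2 := rfl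
  have hsplit := Finset.sum_filter_add_sum_filter_not
    (indepFinsets (SimpleGraph.cycleGraph (n+3))) (fun s => v ∈ s)
    (fun s => (-1:ℤ)^s.card)
  have h2 : ∑ s ∈ (indepFinsets (SimpleGraph.cycleGraph (n+3))).filter (fun s => v ∈ s),
      (-1:ℤ)^s.card = -Psum n := by
    refine sum_sign_insert_map (emb1 n) v ?_ _ _ ?_ ?_ ?_
    · intro a h
      have h1 := a.isLt
      have h2 : a.val + 1 = n + 2 := congrArg Fin.val h
      omega
    · intro t
      simp only [mem_indepFinsets, Finset.mem_filter, Finset.mem_insert_self, and_true]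
      constructor
      · intro hi u hu w hw hadj
        rcases Finset.mem_insert.1 hu with rfl | hu' <;>
          rcases Finset.mem_insert.1 hw with rfl | hw'
        · exact SimpleGraph.irrefl _ hadj
        · obtain ⟨b, hb, rfl⟩ := Finset.mem_map.1 hw'
          have hb2 := b.isLt
          rcases (cyc_adj_last hvval).1 hadj with h | h <;> rw [emb1_val] at h <;> omega
        · obtain ⟨b, hb, rfl⟩ := Finset.mem_map.1 hu'
          have hb2 := b.isLt
          rcases (cyc_adj_last hvval).1 hadj.symm with h | h <;> rw [emb1_val] at h <;> omega
        · obtain ⟨a, ha, rfl⟩ := Finset.mem_map.1 hu'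
          obtain ⟨b, hb, rfl⟩ := Finset.mem_map.1 hw'
          have ha2 := a.isLt
          have hb2 := b.isLt
          refine hi a ha b hb (SimpleGraph.pathGraph_adj.2 ?_)
          rcases (cyc_adj_of_lt (by rw [emb1_val]; omega) (by rw [emb1_val]; omega)).1 hadj
            with h | h <;> rw [emb1_val, emb1_val] at h <;> [left; right] <;> omega
      · intro hi a ha b hb hadj
        have ha2 := a.isLt
        have hb2 := b.isLt
        refine hi _ (Finset.mem_insert_of_mem (mem_map_of_mem _ ha))
          _ (Finset.mem_insert_of_mem (mem_map_of_mem _ hb)) ?_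
        refine (cyc_adj_of_lt (by rw [emb1_val]; omega) (by rw [emb1_val]; omega)).2 ?_
        rw [emb1_val, emb1_val]
        rcases SimpleGraph.pathGraph_adj.1 hadj with h | h <;> [left; right] <;> omega
    · intro s hs
      exact (Finset.mem_filter.1 hs).2
    · intro s hs x hx hxv
      have hind := mem_indepFinsets.1 (Finset.mem_filter.1 hs).1
      have hvs := (Finset.mem_filter.1 hs).2
      have h1 : x.val < n + 3 := x.isLt
      have h2 : x.val ≠ n + 2 := fun h => hxv (Fin.ext (by rw [h]))
      have h3 : x.val ≠ 0 := by
        intro h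
        exact hind v hvs x hx ((cyc_adj_last hvval).2 (Or.inl h))
      have h4 : x.val ≠ n + 1 := by
        intro h
        exact hind v hvs x hx ((cyc_adj_last hvval).2 (Or.inr h))
      refine ⟨⟨x.val - 1, by omega⟩, Fin.ext ?_⟩
      show x.val - 1 + 1 = x.val
      omega
  have h1 : ∑ s ∈ (indepFinsets (SimpleGraph.cycleGraph (n+3))).filter (fun s => ¬ v ∈ s),
      (-1:ℤ)^s.card = Psum (n+2) := by
    refine sum_sign_map (Fin.castSuccEmb) _ _ ?_ ?_
    · intro t
      simp only [mem_indepFinsets, Finset.mem_filter]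
      rw [isIndep_map_iff _ (fun a b => ?_)]
      · constructor
        · intro hi
          refine ⟨hi, fun hvm => ?_⟩
          obtain ⟨a, _, ha⟩ := Finset.mem_map.1 hvm
          have h1 : (a : ℕ) = n + 2 := by simpa [Fin.ext_iff] using ha
          have := a.isLt
          omega
        · exact fun h => h.1
      · have ha2 := a.isLt
        have hb2 := b.isLt
        rw [cyc_adj_of_lt (by simpa using ha2) (by simpa using hb2),
          SimpleGraph.pathGraph_adj]
        simp
    · intro s hs x hx
      have hxv : x ≠ v := fun h => (Finset.mem_filter.1 hs).2 (h ▸ hx)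
      have : x.val < n + 2 := by
        have h1 := x.isLt
        have h2 : x.val ≠ n + 2 := fun h => hxv (Fin.ext h)
        omega
      exact ⟨⟨x.val, this⟩, Fin.ext rfl⟩
  rw [Csum, ← hsplit, h1, h2]
  ring

/-- The sequence `1, 0, -1, -1, 0, 1, 1, 0, …` -/
def pseq : ℕ → ℤ
  | 0 => 1
  | 1 => 0
  | (n+2) => pseq (n+1) - pseq n

lemma pseq_rec (m : ℕ) : pseq (m+2) = pseq (m+1) - pseq m := rfl

lemma Psum_eq (n : ℕ) : Psum n = pseq n := by
  induction n using Nat.strong_induction_on with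
  | _ n ih =>
    match n with
    | 0 => exact Psum_zero
    | 1 => exact Psum_one
    | (m+2) => rw [path_rec, pseq_rec, ih (m+1) (by omega), ih m (by omega)]

lemma pseq_add6 (k : ℕ) : pseq (k+6) = pseq k := by
  have e2 := pseq_rec (k+4)
  have e3 := pseq_rec (k+3)
  have e4 := pseq_rec (k+2)
  have e5 := pseq_rec (k+1)
  have e6 := pseq_rec k
  have h6 : pseq (k+6) = pseq (k+5) - pseq (k+4) := pseq_rec (k+4)
  have h5 : pseq (k+5) = pseq (k+4) - pseq (k+3) := pseq_rec (k+3)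
  have h4 : pseq (k+4) = pseq (k+3) - pseq (k+2) := pseq_rec (k+2)
  have h3 : pseq (k+3) = pseq (k+2) - pseq (k+1) := pseq_rec (k+1)
  have h2 : pseq (k+2) = pseq (k+1) - pseq k := pseq_rec k
  rw [h6, h5, h4, h3, h2]
  ring

lemma pseq_mod (q r : ℕ) : pseq (6*q + r) = pseq r := by
  induction q with
  | zero => simp
  | succ q ih =>
    have : 6*(q+1) + r = (6*q + r) + 6 := by ring
    rw [this, pseq_add6, ih]

/-- For the cycle `C_n` on `n ≥ 3` vertices: `I(C_n,-1) = 2·(-1)^n` if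
`n ≡ 0 (mod 3)`, and `I(C_n,-1) = (-1)^{n-1}` if `n ≡ 1, 2 (mod 3)`. -/
theorem eval_indepPoly_cycleGraph (n : ℕ) (hn : 3 ≤ n) :
    (n % 3 = 0 → (indepPoly (SimpleGraph.cycleGraph n)).eval (-1) = 2 * (-1) ^ n) ∧
    (n % 3 = 1 ∨ n % 3 = 2 →
      (indepPoly (SimpleGraph.cycleGraph n)).eval (-1) = (-1) ^ (n - 1)) := by
  obtain ⟨m, rfl⟩ : ∃ m, n = m + 3 := ⟨n - 3, by omega⟩
  obtain ⟨q, r, hr6, rfl⟩ : ∃ q r, r < 6 ∧ m = 6*q + r :=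
    ⟨m/6, m%6, Nat.mod_lt _ (by norm_num), (Nat.div_add_mod m 6).symm⟩
  have key : (indepPoly (SimpleGraph.cycleGraph (6*q + r + 3))).eval (-1)
      = pseq (r+2) - pseq r := by
    have h0 : (indepPoly (SimpleGraph.cycleGraph (6*q + r + 3))).eval (-1)
        = Csum (6*q + r + 3) := eval_indepPoly_eq_sum _ _
    rw [h0, cyc_rec, Psum_eq, Psum_eq, show 6*q + r + 2 = 6*q + (r+2) by ring,
      pseq_mod, pseq_mod]
  rw [key]
  interval_cases r
  · refine ⟨fun _ => ?_, fun h => by omega⟩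
    have hodd : Odd (6*q + 0 + 3) := Nat.odd_iff.2 (by omega)
    rw [hodd.neg_one_pow]
    decide
  · refine ⟨fun h => by omega, fun _ => ?_⟩
    have hodd : Odd (6*q + 1 + 3 - 1) := Nat.odd_iff.2 (by omega)
    rw [hodd.neg_one_pow]
    decide
  · refine ⟨fun h => by omega, fun _ => ?_⟩
    have hev : Even (6*q + 2 + 3 - 1) := Nat.even_iff.2 (by omega)
    rw [hev.neg_one_pow]
    decide
  · refine ⟨fun _ => ?_, fun h => by omega⟩
    have hev : Even (6*q + 3 + 3) := Nat.even_iff.2 (by omega)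
    rw [hev.neg_one_pow]
    decide
  · refine ⟨fun h => by omega, fun _ => ?_⟩
    have hev : Even (6*q + 4 + 3 - 1) := Nat.even_iff.2 (by omega)
    rw [hev.neg_one_pow]
    decide
  · refine ⟨fun h => by omega, fun _ => ?_⟩
    have hodd : Odd (6*q + 5 + 3 - 1) := Nat.odd_iff.2 (by omega)
    rw [hodd.neg_one_pow]
    decide
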